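/- arXiv:2402.12579 — 2 statements merged into one kernel-verified Lean document; each statement's English description precedes it below -/
import Mathlib

section
/- For any sandwich measure-theoretically subordinate subshift X, the marginals ν_0 and ν_1 of any base measure ρ are ergodic and do not depend on the choice of the base measure ρ. Moreover, ν_1(1) = sup{μ(1) : μ ∈ 𝓜(X)} and ν_0(0) = sup{μ(0) : μ ∈ 𝓜(X)}, and ν_1 and ν_0 are the unique members of 𝓜(X) realizing these respective suprema. -/
/-!
Let `π_b` be the projection to the lower (`b = 0`) or upper (`b = 1`) sequence and
`ν_b = (π_b)_*ρ`. If `μ = N_*κ ∈ 𝓜(X)`, then `w ≤ N(w,x,y) ≤ x` holds κ-a.e., so `N(t)₀ = b`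
forces `π_b(t)₀ = b` and `μ(b) ≤ ν_b(b)`. Equality makes `N(t)₀ = π_b(t)₀` κ-a.e., hence
`N = π_b` κ-a.e. by shift invariance of κ, i.e. `μ = ν_b`. As `ν_b = N_*(ρ × δ_{b^ℤ}) ∈ 𝓜(X)`,
it is the unique maximizer of `μ(b)` on `𝓜(X)`, which pins it down independently of `ρ`; and it
is ergodic, since conditioning it on a nontrivial invariant set would produce a second maximizer.
-/

open MeasureTheory Filter Topology

/-- The full shift space `{0,1}^ℤ`, with `Bool` playing the role of `{0,1}`
(`false` ↔ `0`, `true` ↔ `1`). -/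
abbrev BinSeq : Type := ℤ → Bool

/-- The left shift `σ`. -/
def shift : BinSeq → BinSeq := fun x n => x (n + 1)

/-- The product shift `σ × σ`. -/
def shift2 : BinSeq × BinSeq → BinSeq × BinSeq := Prod.map shift shift

/-- The product shift `σ × σ × σ` on triples `((w,x),y)`. -/
def shift3 : (BinSeq × BinSeq) × BinSeq → (BinSeq × BinSeq) × BinSeq := Prod.map shift2 shift

/-- Coordinatewise multiplication `M(x,y)` of two 0-1 sequences. -/
def Mmul : BinSeq × BinSeq → BinSeq := fun p n => p.1 n && p.2 n

/-- The map `N((w,x),y) = (1-y)·w + y·x` (coordinatewise: `x` where `y = 1`, `w` where `y = 0`). -/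
def Nmap : (BinSeq × BinSeq) × BinSeq → BinSeq := fun t n => bif t.2 n then t.1.2 n else t.1.1 n

/-- The coordinatewise partial order `y ≤ x` on `{0,1}^ℤ`. -/
def leSeq (y x : BinSeq) : Prop := ∀ n, y n ≤ x n

/-- A subshift: a closed, shift-invariant subset of `{0,1}^ℤ`. -/
def IsSubshift (X : Set BinSeq) : Prop := IsClosed X ∧ shift ⁻¹' X = X

/-- The set of `T`-invariant Borel probability measures. -/
def InvProb {α : Type*} [MeasurableSpace α] (T : α → α) : Set (Measure α) :=
  {μ | IsProbabilityMeasure μ ∧ Measure.map T μ = μ}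

/-- `𝓜(X)`: shift-invariant Borel probability measures concentrated on `X`. -/
def MeasOn (X : Set BinSeq) : Set (Measure BinSeq) :=
  {μ | μ ∈ InvProb shift ∧ μ X = 1}

/-- `𝓜(Z)` for `Z ⊆ {0,1}^ℤ × {0,1}^ℤ`. -/
def MeasOn2 (Z : Set (BinSeq × BinSeq)) : Set (Measure (BinSeq × BinSeq)) :=
  {ρ | ρ ∈ InvProb shift2 ∧ ρ Z = 1}

/-- `X` is a measure-theoretically subordinate subshift with base measure `ν`:
`𝓜(X) = {M_*(ρ) : ρ ∈ 𝓜({0,1}^ℤ × {0,1}^ℤ, σ×σ), (π₁)_*(ρ) = ν}`. -/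
def Subord (X : Set BinSeq) (ν : Measure BinSeq) : Prop :=
  MeasOn X = {μ | ∃ ρ ∈ InvProb shift2,
    Measure.map Prod.fst ρ = ν ∧ Measure.map Mmul ρ = μ}

/-- `X` is a sandwich measure-theoretically subordinate subshift with pre-base measure `ρ`:
`𝓜(X) = {N_*(κ) : κ ∈ 𝓜(({0,1}^ℤ)³), (π₁,₂)_*(κ) = ρ}`. -/
def SandwichSubord (X : Set BinSeq) (ρ : Measure (BinSeq × BinSeq)) : Prop :=
  MeasOn X = {μ | ∃ κ ∈ InvProb shift3,
    Measure.map Prod.fst κ = ρ ∧ Measure.map Nmap κ = μ}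

/-- `ρ({(w,x) : w ≤ x coordinatewise}) = 1`: a pre-base measure satisfying this is a base
measure. -/
def AboveDiag (ρ : Measure (BinSeq × BinSeq)) : Prop :=
  ρ {p : BinSeq × BinSeq | ∀ n, p.1 n ≤ p.2 n} = 1

/-- The cylinder `{x : x₀ = b}`. -/
def cylB (b : Bool) : Set BinSeq := {x : BinSeq | x 0 = b}

/-- The set `[w,x] = {σ^k y : w ≤ y ≤ x, k ∈ ℤ}`. -/
def sandwichSet (w x : BinSeq) : Set BinSeq :=
  {z | ∃ (k : ℤ) (y : BinSeq), (∀ n, w n ≤ y n) ∧ (∀ n, y n ≤ x n) ∧ z = fun n => y (n + k)}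

/-- Topological entropy (base-2) of a subshift: exponential growth rate of the number of
`n`-blocks appearing in `X`. -/
noncomputable def htop (X : Set BinSeq) : ℝ :=
  Filter.limsup (fun n : ℕ =>
    Real.logb 2
      ((Set.ncard {A : Fin n → Bool | ∃ x ∈ X, ∀ i : Fin n, x ((i : ℕ) : ℤ) = A i} : ℝ))
      / (n : ℝ)) Filter.atTop

/-- Kolmogorov–Sinai entropy (base-2) of a shift-invariant measure on `{0,1}^ℤ`,
computed via the generating partition into cylinders. -/
noncomputable def entropy (μ : Measure BinSeq) : ℝ :=
  Filter.limsup (fun n : ℕ =>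
    (∑ A : Fin n → Bool,
      Real.negMulLog ((μ {x : BinSeq | ∀ i : Fin n, x ((i : ℕ) : ℤ) = A i}).toReal))
      / ((n : ℝ) * Real.log 2)) Filter.atTop

/-- Kolmogorov–Sinai entropy (base-2) of a `σ×σ`-invariant measure on
`{0,1}^ℤ × {0,1}^ℤ`. -/
noncomputable def entropy2 (ρ : Measure (BinSeq × BinSeq)) : ℝ :=
  Filter.limsup (fun n : ℕ =>
    (∑ A : Fin n → Bool, ∑ B : Fin n → Bool,
      Real.negMulLog ((ρ {p : BinSeq × BinSeq |
        (∀ i : Fin n, p.1 ((i : ℕ) : ℤ) = A i) ∧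
        (∀ i : Fin n, p.2 ((i : ℕ) : ℤ) = B i)}).toReal))
      / ((n : ℝ) * Real.log 2)) Filter.atTop

open scoped Classical in
/-- Topological pressure (base-2) of a subshift `X` with potential `φ`:
`𝒫_{X,φ} = lim (1/n) log₂ Σ_{A ∈ ℒ_n(X)} 2^{sup_{x ∈ [A] ∩ X} φ⁽ⁿ⁾(x)}`. -/
noncomputable def pressure (X : Set BinSeq) (φ : BinSeq → ℝ) : ℝ :=
  Filter.limsup (fun n : ℕ =>
    Real.logb 2 (∑ A : Fin n → Bool,
      if ∃ x ∈ X, ∀ i : Fin n, x ((i : ℕ) : ℤ) = A i then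
        (2 : ℝ) ^ sSup {r : ℝ | ∃ x ∈ X, (∀ i : Fin n, x ((i : ℕ) : ℤ) = A i) ∧
          r = ∑ k ∈ Finset.range n, φ (shift^[k] x)}
      else 0) / (n : ℝ)) Filter.atTop

/-- Birkhoff average of a continuous function along the first `N` points of the `T`-orbit. -/
noncomputable def birkAvg {α : Type*} [TopologicalSpace α] (T : α → α) (x : α) (N : ℕ)
    (f : C(α, ℝ)) : ℝ :=
  (∑ n ∈ Finset.range N, f (T^[n] x)) / (N : ℝ)

/-- `x` is quasi-generic for `μ` along `(N i)`: the empirical measures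
`(1/N_i) Σ_{n<N_i} δ_{T^n x}` converge weakly-* to `μ`. -/
def QuasiGenericAlong {α : Type*} [TopologicalSpace α] [MeasurableSpace α]
    (T : α → α) (x : α) (N : ℕ → ℕ) (μ : Measure α) : Prop :=
  ∀ f : C(α, ℝ), Filter.Tendsto (fun i => birkAvg T x (N i) f) Filter.atTop
    (nhds (∫ y, f y ∂μ))

/-- `x` is generic for `μ`. -/
def GenericFor {α : Type*} [TopologicalSpace α] [MeasurableSpace α]
    (T : α → α) (x : α) (μ : Measure α) : Prop :=
  QuasiGenericAlong T x (fun i => i) μ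

/-- Weak-* convergence of a sequence of measures. -/
def WeakTendsto {α : Type*} [TopologicalSpace α] [MeasurableSpace α]
    (μs : ℕ → Measure α) (μ : Measure α) : Prop :=
  ∀ f : C(α, ℝ), Filter.Tendsto (fun K => ∫ y, f y ∂(μs K)) Filter.atTop
    (nhds (∫ y, f y ∂μ))

/-- `V(y)`: the invariant measures for which `y` is quasi-generic (along some
increasing sequence). -/
def Vset (y : BinSeq) : Set (Measure BinSeq) :=
  {μ | μ ∈ InvProb shift ∧ ∃ N : ℕ → ℕ, StrictMono N ∧ QuasiGenericAlong shift y N μ}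

/-- `V_{(N_i)}(y)`: the invariant measures for which `y` is quasi-generic along a
subsequence of `(N_i)`. -/
def VsetAlong (N : ℕ → ℕ) (y : BinSeq) : Set (Measure BinSeq) :=
  {μ | μ ∈ InvProb shift ∧ ∃ φ : ℕ → ℕ, StrictMono φ ∧ QuasiGenericAlong shift y (N ∘ φ) μ}

/-- `β` is the Bernoulli product measure on `{0,1}^ℤ` with `β({x : x₀ = 0}) = p`. -/
def IsBernoulli (p : ENNReal) (β : Measure BinSeq) : Prop :=
  IsProbabilityMeasure β ∧ ∀ (s : Finset ℤ) (A : ℤ → Bool),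
    β {x : BinSeq | ∀ i ∈ s, x i = A i} = ∏ i ∈ s, (if A i = false then p else 1 - p)

open ProbabilityTheory

section UniqueMaximizer

variable {α : Type*} [MeasurableSpace α] {T : α → α}

theorem ergodic_of_unique_maximizer {ν : Measure α} [IsProbabilityMeasure ν]
    {M : Set (Measure α)} {A : Set α} (hT : MeasurePreserving T ν ν)
    (hcond : ∀ s, MeasurableSet s → T ⁻¹' s = s → ν s ≠ 0 → ν[|s] ∈ M)
    (hmax : ∀ μ ∈ M, μ A ≤ ν A) (huniq : ∀ μ ∈ M, μ A = ν A → μ = ν) : Ergodic T ν := by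
  refine ⟨hT, ⟨fun s hs hTs => ?_⟩⟩
  rw [eventuallyConst_set', ae_eq_empty, ae_eq_univ]
  by_contra! h
  obtain ⟨hs0, hsc0⟩ := h
  have hTsc : T ⁻¹' sᶜ = sᶜ := by rw [Set.preimage_compl, hTs]
  -- `ν A` is the average of `ν[A|s]` and `ν[A|sᶜ]`, neither of which exceeds `ν A`
  have hle : ν A * ν s ≤ ν[A|s] * ν s := by
    refine ENNReal.le_of_add_le_add_right (a := ν A * ν sᶜ) (by finiteness) ?_
    calc ν A * ν s + ν A * ν sᶜ = ν A := by
          rw [← mul_add, measure_add_measure_compl hs, measure_univ, mul_one]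
      _ = ν[A|s] * ν s + ν[A|sᶜ] * ν sᶜ := (cond_add_cond_compl_eq hs ν).symm
      _ ≤ ν[A|s] * ν s + ν A * ν sᶜ := by
          gcongr ν[A|s] * ν s + ?_ * ν sᶜ; exact hmax _ (hcond _ hs.compl hTsc hsc0)
  have hνs : ν[|s] = ν := by
    refine huniq _ (hcond s hs hTs hs0) (le_antisymm (hmax _ (hcond s hs hTs hs0)) ?_)
    exact (ENNReal.mul_le_mul_iff_left hs0 (measure_ne_top _ _)).1 hle
  apply hsc0
  rw [← hνs, cond_apply hs, Set.inter_compl_self, measure_empty, mul_zero]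

theorem cond_mem_invProb {μ : Measure α} {s : Set α} (hT : Measurable T) (hμ : μ ∈ InvProb T)
    (hs : MeasurableSet s) (hTs : T ⁻¹' s = s) (hμs : μ s ≠ 0) : μ[|s] ∈ InvProb T := by
  have := hμ.1
  refine ⟨cond_isProbabilityMeasure hμs, ?_⟩
  have h := (MeasurePreserving.restrict_preimage ⟨hT, hμ.2⟩ hs).map_eq
  rw [hTs] at h
  rw [ProbabilityTheory.cond, Measure.map_smul, h]

end UniqueMaximizer

lemma measurable_shift : Measurable shift := by unfold shift; fun_prop

lemma measurable_shift2 : Measurable shift2 := measurable_shift.prodMap measurable_shift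

lemma measurable_shift3 : Measurable shift3 := measurable_shift2.prodMap measurable_shift

lemma measurable_Nmap : Measurable Nmap := by unfold Nmap; fun_prop

lemma measurableSet_cylB (b : Bool) : MeasurableSet (cylB b) :=
  measurableSet_eq_fun (measurable_pi_apply 0) measurable_const

lemma cond_mem_measOn {X : Set BinSeq} {μ : Measure BinSeq} {s : Set BinSeq}
    (hX : MeasurableSet X) (hμ : μ ∈ MeasOn X) (hs : MeasurableSet s) (hTs : shift ⁻¹' s = s)
    (hμs : μ s ≠ 0) : μ[|s] ∈ MeasOn X := by
  have := hμ.1.1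
  have := cond_isProbabilityMeasure (s := s) hμs
  refine ⟨cond_mem_invProb measurable_shift hμ.1 hs hTs hμs, (prob_compl_eq_zero_iff hX).1 ?_⟩
  exact cond_absolutelyContinuous ((prob_compl_eq_zero_iff hX).2 hμ.2)

/-- `sel b` picks the lower sequence of a pair for `b = false` and the upper one for `b = true`,
so `ρ.map (sel false)` and `ρ.map (sel true)` are the marginals `ν₀` and `ν₁`. -/
def sel (b : Bool) : BinSeq × BinSeq → BinSeq := bif b then Prod.snd else Prod.fst

lemma measurable_sel (b : Bool) : Measurable (sel b) := by
  cases b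
  exacts [measurable_fst, measurable_snd]

lemma sel_shift2 (b : Bool) (p : BinSeq × BinSeq) : sel b (shift2 p) = shift (sel b p) := by
  cases b <;> rfl

lemma Nmap_const (b : Bool) (p : BinSeq × BinSeq) : Nmap (p, fun _ => b) = sel b p := by
  cases b <;> rfl

lemma sel_eq_of_Nmap_eq {t : (BinSeq × BinSeq) × BinSeq} (hle : ∀ n, t.1.1 n ≤ t.1.2 n)
    {n : ℤ} {b : Bool} (h : Nmap t n = b) : sel b t.1 n = b := by
  obtain ⟨⟨w, x⟩, y⟩ := t
  have hwx : w n ≤ x n := hle n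
  cases b <;> simp only [Nmap, sel, cond_false, cond_true] at h ⊢ <;> revert h hwx <;>
    cases y n <;> cases w n <;> cases x n <;> decide

lemma measurableSet_fst_le_snd : MeasurableSet {p : BinSeq × BinSeq | ∀ n, p.1 n ≤ p.2 n} :=
  measurableSet_setOfPred.2 <| Measurable.forall fun n =>
    (measurable_of_countable fun q : Bool × Bool => q.1 ≤ q.2).comp
      (f := fun p : BinSeq × BinSeq => (p.1 n, p.2 n)) (by fun_prop)

section ShiftEquivariant

variable {α : Type*} [MeasurableSpace α] {κ : Measure α} {F G : α → BinSeq}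

lemma map_cylB_le_of_ae (hF : Measurable F) (hG : Measurable G) {b : Bool}
    (h : ∀ᵐ a ∂κ, F a 0 = b → G a 0 = b) : κ.map F (cylB b) ≤ κ.map G (cylB b) := by
  rw [Measure.map_apply hF (measurableSet_cylB b), Measure.map_apply hG (measurableSet_cylB b)]
  exact measure_mono_ae h

lemma ae_apply_zero_eq_of_map_cylB_eq [IsFiniteMeasure κ] (hF : Measurable F)
    (hG : Measurable G) {b : Bool} (h : ∀ᵐ a ∂κ, F a 0 = b → G a 0 = b)
    (heq : κ.map F (cylB b) = κ.map G (cylB b)) : ∀ᵐ a ∂κ, F a 0 = G a 0 := by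
  rw [Measure.map_apply hF (measurableSet_cylB b), Measure.map_apply hG (measurableSet_cylB b)]
    at heq
  have hFG := ae_eq_of_ae_subset_of_measure_ge h heq.ge
    (hF (measurableSet_cylB b)).nullMeasurableSet (measure_ne_top _ _)
  filter_upwards [eventuallyEq_set.1 hFG] with a ha
  change F a 0 = b ↔ G a 0 = b at ha
  revert ha
  cases b <;> cases F a 0 <;> cases G a 0 <;> decide

lemma ae_eq_of_ae_apply_zero_eq {T : α → α} (hT : MeasurePreserving T κ κ)
    (hF : Measurable F) (hG : Measurable G) (hFT : ∀ a, F (T a) = shift (F a))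
    (hGT : ∀ a, G (T a) = shift (G a)) (h0 : ∀ᵐ a ∂κ, F a 0 = G a 0) : F =ᵐ[κ] G := by
  have hstep (n : ℤ) : κ {a | F a (n + 1) ≠ G a (n + 1)} = κ {a | F a n ≠ G a n} := by
    have hpre : T ⁻¹' {a | F a n ≠ G a n} = {a | F a (n + 1) ≠ G a (n + 1)} := by
      ext a; simp [hFT, hGT, shift]
    rw [← hpre, hT.measure_preimage]
    exact (measurableSet_eq_fun ((measurable_pi_apply n).comp hF)
      ((measurable_pi_apply n).comp hG)).compl.nullMeasurableSet
  have hcoord (n : ℤ) : ∀ᵐ a ∂κ, F a n = G a n := by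
    rw [ae_iff]
    induction n using Int.induction_on with
    | zero => exact ae_iff.1 h0
    | succ n ih => rwa [hstep]
    | pred n ih => rwa [← hstep, sub_add_cancel]
  filter_upwards [ae_all_iff.2 hcoord] with a ha using funext ha

end ShiftEquivariant

section Lift

variable {ρ : Measure (BinSeq × BinSeq)} {κ : Measure ((BinSeq × BinSeq) × BinSeq)}

lemma ae_sel_eq_of_Nmap_eq [IsProbabilityMeasure κ] (hfst : κ.map Prod.fst = ρ)
    (hdiag : AboveDiag ρ) (b : Bool) : ∀ᵐ t ∂κ, Nmap t 0 = b → sel b t.1 0 = b := by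
  have : IsProbabilityMeasure ρ :=
    hfst ▸ Measure.isProbabilityMeasure_map measurable_fst.aemeasurable
  have hρ : ∀ᵐ p ∂ρ, ∀ n, p.1 n ≤ p.2 n :=
    (ae_iff_measure_eq measurableSet_fst_le_snd.nullMeasurableSet).2
      (by rw [measure_univ]; exact hdiag)
  rw [← hfst] at hρ
  filter_upwards [ae_of_ae_map measurable_fst.aemeasurable hρ] with t ht
  exact sel_eq_of_Nmap_eq ht

lemma map_sel_eq_map_comp_fst (hfst : κ.map Prod.fst = ρ) (b : Bool) :
    ρ.map (sel b) = κ.map (sel b ∘ Prod.fst) := by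
  rw [← hfst, Measure.map_map (measurable_sel b) measurable_fst]

lemma map_Nmap_cylB_le [IsProbabilityMeasure κ] (hfst : κ.map Prod.fst = ρ)
    (hdiag : AboveDiag ρ) (b : Bool) : κ.map Nmap (cylB b) ≤ ρ.map (sel b) (cylB b) := by
  rw [map_sel_eq_map_comp_fst hfst]
  exact map_cylB_le_of_ae measurable_Nmap ((measurable_sel b).comp measurable_fst)
    (ae_sel_eq_of_Nmap_eq hfst hdiag b)

lemma map_Nmap_eq_of_cylB_eq (hκ : κ ∈ InvProb shift3) (hfst : κ.map Prod.fst = ρ)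
    (hdiag : AboveDiag ρ) {b : Bool} (h : κ.map Nmap (cylB b) = ρ.map (sel b) (cylB b)) :
    κ.map Nmap = ρ.map (sel b) := by
  have := hκ.1
  have hG : Measurable (sel b ∘ Prod.fst : (BinSeq × BinSeq) × BinSeq → BinSeq) :=
    (measurable_sel b).comp measurable_fst
  rw [map_sel_eq_map_comp_fst hfst] at h ⊢
  refine Measure.map_congr (ae_eq_of_ae_apply_zero_eq ⟨measurable_shift3, hκ.2⟩
    measurable_Nmap hG (fun _ => rfl) (fun t => sel_shift2 b t.1) ?_)
  exact ae_apply_zero_eq_of_map_cylB_eq measurable_Nmap hG (ae_sel_eq_of_Nmap_eq hfst hdiag b) h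

end Lift

namespace SandwichSubord

variable {X : Set BinSeq} {ρ ρ' : Measure (BinSeq × BinSeq)} {μ : Measure BinSeq}

lemma exists_lift (hsub : SandwichSubord X ρ) (hμ : μ ∈ MeasOn X) :
    ∃ κ ∈ InvProb shift3, κ.map Prod.fst = ρ ∧ κ.map Nmap = μ :=
  Eq.subset hsub hμ

lemma map_sel_mem (hsub : SandwichSubord X ρ) (hρ : ρ ∈ InvProb shift2) (b : Bool) :
    ρ.map (sel b) ∈ MeasOn X := by
  have := hρ.1
  let g : BinSeq × BinSeq → (BinSeq × BinSeq) × BinSeq := fun p => (p, fun _ => b)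
  have hg : Measurable g := measurable_id.prodMk measurable_const
  refine Eq.superset hsub
    ⟨ρ.map g, ⟨Measure.isProbabilityMeasure_map hg.aemeasurable, ?_⟩, ?_, ?_⟩
  · rw [Measure.map_map measurable_shift3 hg, show shift3 ∘ g = g ∘ shift2 from rfl,
      ← Measure.map_map hg measurable_shift2, hρ.2]
  · rw [Measure.map_map measurable_fst hg]
    exact Measure.map_id
  · rw [Measure.map_map measurable_Nmap hg]
    exact congrArg (Measure.map · ρ) (funext (Nmap_const b))

lemma measure_cylB_le (hsub : SandwichSubord X ρ) (hdiag : AboveDiag ρ) (hμ : μ ∈ MeasOn X)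
    (b : Bool) : μ (cylB b) ≤ ρ.map (sel b) (cylB b) := by
  obtain ⟨κ, hκ, hfst, rfl⟩ := hsub.exists_lift hμ
  have := hκ.1
  exact map_Nmap_cylB_le hfst hdiag b

lemma eq_map_sel_of_measure_cylB_eq (hsub : SandwichSubord X ρ) (hdiag : AboveDiag ρ)
    (hμ : μ ∈ MeasOn X) {b : Bool} (h : μ (cylB b) = ρ.map (sel b) (cylB b)) :
    μ = ρ.map (sel b) := by
  obtain ⟨κ, hκ, hfst, rfl⟩ := hsub.exists_lift hμ
  exact map_Nmap_eq_of_cylB_eq hκ hfst hdiag h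

lemma ergodic_map_sel (hsub : SandwichSubord X ρ) (hX : IsSubshift X) (hρ : ρ ∈ InvProb shift2)
    (hdiag : AboveDiag ρ) (b : Bool) : Ergodic shift (ρ.map (sel b)) := by
  have hν := hsub.map_sel_mem hρ b
  have := hν.1.1
  exact ergodic_of_unique_maximizer (A := cylB b) ⟨measurable_shift, hν.1.2⟩
    (fun s hs hTs hs0 => cond_mem_measOn hX.1.measurableSet hν hs hTs hs0)
    (fun μ hμ => hsub.measure_cylB_le hdiag hμ b)
    (fun μ hμ => hsub.eq_map_sel_of_measure_cylB_eq hdiag hμ)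

lemma map_sel_eq (hsub : SandwichSubord X ρ) (hρ : ρ ∈ InvProb shift2) (hdiag : AboveDiag ρ)
    (hsub' : SandwichSubord X ρ') (hρ' : ρ' ∈ InvProb shift2) (hdiag' : AboveDiag ρ')
    (b : Bool) : ρ'.map (sel b) = ρ.map (sel b) := by
  have hν' := hsub'.map_sel_mem hρ' b
  refine hsub.eq_map_sel_of_measure_cylB_eq hdiag hν' (le_antisymm ?_ ?_)
  · exact hsub.measure_cylB_le hdiag hν' b
  · exact hsub'.measure_cylB_le hdiag' (hsub.map_sel_mem hρ b) b

end SandwichSubord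

/-- For a sandwich measure-theoretically subordinate subshift `X`, the marginals
`ν₀, ν₁` of any base measure `ρ` are ergodic and independent of the choice of `ρ`; moreover
`ν₁` (resp. `ν₀`) is the unique member of `𝓜(X)` maximizing `μ(1)` (resp. `μ(0)`). -/
theorem stmt8 (X : Set BinSeq) (ρ : Measure (BinSeq × BinSeq))
    (hX : IsSubshift X) (hρ : ρ ∈ InvProb shift2)
    (hsub : SandwichSubord X ρ) (hdiag : AboveDiag ρ) :
    Ergodic shift (Measure.map Prod.fst ρ) ∧
    Ergodic shift (Measure.map Prod.snd ρ) ∧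
    (∀ ρ' ∈ InvProb shift2, SandwichSubord X ρ' → AboveDiag ρ' →
      Measure.map Prod.fst ρ' = Measure.map Prod.fst ρ ∧
      Measure.map Prod.snd ρ' = Measure.map Prod.snd ρ) ∧
    (Measure.map Prod.snd ρ ∈ MeasOn X ∧
      (∀ μ ∈ MeasOn X, μ (cylB true) ≤ (Measure.map Prod.snd ρ) (cylB true)) ∧
      (∀ μ ∈ MeasOn X, μ (cylB true) = (Measure.map Prod.snd ρ) (cylB true) →
        μ = Measure.map Prod.snd ρ)) ∧
    (Measure.map Prod.fst ρ ∈ MeasOn X ∧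
      (∀ μ ∈ MeasOn X, μ (cylB false) ≤ (Measure.map Prod.fst ρ) (cylB false)) ∧
      (∀ μ ∈ MeasOn X, μ (cylB false) = (Measure.map Prod.fst ρ) (cylB false) →
        μ = Measure.map Prod.fst ρ)) := by
  have hmaximizer (b : Bool) : ρ.map (sel b) ∈ MeasOn X ∧
      (∀ μ ∈ MeasOn X, μ (cylB b) ≤ ρ.map (sel b) (cylB b)) ∧
      (∀ μ ∈ MeasOn X, μ (cylB b) = ρ.map (sel b) (cylB b) → μ = ρ.map (sel b)) :=
    ⟨hsub.map_sel_mem hρ b, fun _ hμ => hsub.measure_cylB_le hdiag hμ b,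
      fun _ hμ => hsub.eq_map_sel_of_measure_cylB_eq hdiag hμ⟩
  refine ⟨hsub.ergodic_map_sel hX hρ hdiag false, hsub.ergodic_map_sel hX hρ hdiag true,
    fun ρ' hρ' hsub' hdiag' => ⟨?_, ?_⟩, hmaximizer true, hmaximizer false⟩
  · exact hsub.map_sel_eq hρ hdiag hsub' hρ' hdiag' false
  · exact hsub.map_sel_eq hρ hdiag hsub' hρ' hdiag' true
end

section
/- Let (w_K, x_K) ⊆ {0,1}^ℤ × {0,1}^ℤ be a good sequence of pairs with coordinatewise limit (w, x). If for each K the subshift [w_K, x_K]‾ (the closure of {σ^n y : w_K ≤ y ≤ x_K, n ∈ ℤ}) is a sandwich measure-theoretically subordinate subshift with base measure ρ_K (corresponding to the sequence (N_i) in the definition of goodness), then both ⋂_{K≥1} [w_K, x_K]‾ and [w, x]‾ are sandwich measure-theoretically subordinate subshifts with base measure ρ = lim_K ρ_K. -/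
open MeasureTheory Filter Topology

/-!
Since `w_K ≤ w ≤ x ≤ x_K`, the pairs `(w_K, x_K)` and `(w, x)` can only disagree at a coordinate
that is free (`0` below, `1` above) for `(w_K, x_K)` but not for `(w, x)`. Hence along the
averaging times `N_i` the two orbits disagree somewhere in a window of length `2M + 1` with
frequency at most `(2M + 1) (ρ_K[free] - ρ[free])`, which tends to `0`; as continuous functions
only see finite windows up to `ε`, this gives `ρ_K → ρ` weakly.

If `μ` lies on `⋂ [w_K, x_K]‾`, it is `N_*κ_K` for lifts `κ_K` of `ρ_K`; a weak-* limit point of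
the `κ_K` is an invariant lift of `ρ` that still pushes forward to `μ`. Conversely `ρ` is carried
by the orbit closure of `(w, x)`, over which `N` takes values in `[w, x]‾`, so every `N_*κ` with
`κ` over `ρ` lives on `[w, x]‾ ⊆ ⋂ [w_K, x_K]‾`. The resulting cycle of inclusions
`𝓜([w, x]‾) ⊆ 𝓜(⋂ [w_K, x_K]‾) ⊆ {N_*κ} ⊆ 𝓜([w, x]‾)` gives both equalities.
-/

lemma Monotone.le_of_eventually_eq {β : Type*} [Preorder β] {a : ℕ → β} (ha : Monotone a)
    {b : β} (h : ∃ K0, ∀ K ≥ K0, a K = b) (K : ℕ) : a K ≤ b := by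
  obtain ⟨K0, hK0⟩ := h
  exact (ha (le_max_left K K0)).trans_eq (hK0 _ (le_max_right K K0))

lemma Antitone.ge_of_eventually_eq {β : Type*} [Preorder β] {a : ℕ → β} (ha : Antitone a)
    {b : β} (h : ∃ K0, ∀ K ≥ K0, a K = b) (K : ℕ) : b ≤ a K := by
  obtain ⟨K0, hK0⟩ := h
  exact (hK0 _ (le_max_right K K0)).symm.trans_le (ha (le_max_left K K0))

lemma abs_birkAvg_sub_le {α : Type*} [TopologicalSpace α] {T : α → α} {p q : α} (n : ℕ)
    {f g : C(α, ℝ)} {ε : ℝ} (hε : 0 ≤ ε)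
    (hfg : ∀ k, |f (T^[k] p) - f (T^[k] q)| ≤ ε + (g (T^[k] p) - g (T^[k] q))) :
    |birkAvg T p n f - birkAvg T q n f| ≤ ε + (birkAvg T p n g - birkAvg T q n g) := by
  rcases n.eq_zero_or_pos with rfl | hn
  · simpa [birkAvg] using hε
  have hn' : (0 : ℝ) < n := Nat.cast_pos.2 hn
  simp only [birkAvg, ← sub_div, ← Finset.sum_sub_distrib, abs_div, Nat.abs_cast]
  rw [div_le_iff₀ hn', add_mul, div_mul_cancel₀ _ hn'.ne']
  calc |∑ k ∈ Finset.range n, (f (T^[k] p) - f (T^[k] q))|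
      ≤ ∑ k ∈ Finset.range n, |f (T^[k] p) - f (T^[k] q)| := Finset.abs_sum_le_sum_abs _ _
    _ ≤ ∑ k ∈ Finset.range n, (ε + (g (T^[k] p) - g (T^[k] q))) :=
        Finset.sum_le_sum fun k _ => hfg k
    _ = ε * n + ∑ k ∈ Finset.range n, (g (T^[k] p) - g (T^[k] q)) := by
      rw [Finset.sum_add_distrib, Finset.sum_const, Finset.card_range, nsmul_eq_mul, mul_comm]

namespace QuasiGenericAlong

variable {α : Type*} [TopologicalSpace α] [MeasurableSpace α] {T : α → α} {N : ℕ → ℕ}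

lemma integral_eq_of_eqOn_orbit {x : α} {μ : Measure α} (h : QuasiGenericAlong T x N μ)
    {f g : C(α, ℝ)} (hfg : ∀ n, f (T^[n] x) = g (T^[n] x)) :
    ∫ y, f y ∂μ = ∫ y, g y ∂μ :=
  tendsto_nhds_unique (h f) (by simpa only [birkAvg, hfg] using h g)

lemma measure_eq_one [OpensMeasurableSpace α] [HasOuterApproxClosed α] {x : α} {μ : Measure α}
    [IsProbabilityMeasure μ] (h : QuasiGenericAlong T x N μ) {F : Set α} (hF : IsClosed F)
    (hxF : ∀ n, T^[n] x ∈ F) : μ F = 1 := by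
  have happr : ∀ n, ∫⁻ y, hF.apprSeq n y ∂μ = 1 := fun n => by
    have hint := h.integral_eq_of_eqOn_orbit
      (f := (ContinuousMap.mk _ NNReal.continuous_coe).comp (hF.apprSeq n).toContinuousMap)
      (g := 1) fun k => by simp [HasOuterApproxClosed.apprSeq_apply_eq_one hF n (hxF k)]
    refine (ENNReal.toReal_eq_one_iff _).1 ?_
    rw [BoundedContinuousFunction.toReal_lintegral_coe_eq_integral]
    simpa using hint
  exact tendsto_nhds_unique (HasOuterApproxClosed.tendsto_lintegral_apprSeq hF μ)
    (by simp only [happr, tendsto_const_nhds])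

lemma abs_integral_sub_le {p q : α} {μ ν : Measure α} (hp : QuasiGenericAlong T p N μ)
    (hq : QuasiGenericAlong T q N ν) {f g : C(α, ℝ)} {ε : ℝ} (hε : 0 ≤ ε)
    (hfg : ∀ k, |f (T^[k] p) - f (T^[k] q)| ≤ ε + (g (T^[k] p) - g (T^[k] q))) :
    |∫ y, f y ∂μ - ∫ y, f y ∂ν| ≤ ε + (∫ y, g y ∂μ - ∫ y, g y ∂ν) :=
  le_of_tendsto_of_tendsto' ((hp f).sub (hq f)).abs (tendsto_const_nhds.add ((hp g).sub (hq g)))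
    fun i => abs_birkAvg_sub_le (N i) hε hfg

end QuasiGenericAlong

lemma ContinuousMap.exists_abs_sub_lt_of_iInter_subset_diagonal {X : Type*} [TopologicalSpace X]
    [CompactSpace X] (f : C(X, ℝ)) {V : ℕ → Set (X × X)} (hV : Antitone V)
    (hVc : ∀ M, IsClosed (V M)) (hdiag : ⋂ M, V M ⊆ Set.diagonal X) {ε : ℝ} (hε : 0 < ε) :
    ∃ M, ∀ p ∈ V M, |f p.1 - f p.2| < ε := by
  have hU : IsOpen {p : X × X | |f p.1 - f p.2| < ε} := isOpen_lt (by fun_prop) continuous_const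
  refine exists_subset_nhds_of_isCompact' hV.directed_ge (fun M => (hVc M).isCompact) hVc
    fun p hp => hU.mem_nhds ?_
  simpa [Set.mem_diagonal_iff.1 (hdiag hp)] using hε

lemma MeasureTheory.ProbabilityMeasure.toMeasure_map_eq_of_tendsto {Ω W ι : Type*}
    [TopologicalSpace Ω] [MeasurableSpace Ω] [OpensMeasurableSpace Ω]
    [TopologicalSpace W] [MeasurableSpace W] [BorelSpace W] [HasOuterApproxClosed W]
    {L : Filter ι} [L.NeBot] {κ : ι → ProbabilityMeasure Ω} {κ' : ProbabilityMeasure Ω}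
    (hκ : Tendsto κ L (𝓝 κ')) {g : Ω → W} (hg : Continuous g) {ν : ProbabilityMeasure W}
    (hν : Tendsto (fun i => ProbabilityMeasure.map (κ i) hg.measurable.aemeasurable) L (𝓝 ν)) :
    (κ' : Measure Ω).map g = ν :=
  congrArg ((↑) : ProbabilityMeasure W → Measure W)
    (tendsto_nhds_unique (tendsto_map_of_tendsto_of_continuous _ _ hκ hg) hν)

theorem exists_mem_invProb_map_eq_of_tendsto {Ω Y Z : Type*}
    [TopologicalSpace Ω] [MeasurableSpace Ω] [BorelSpace Ω] [T2Space Ω] [CompactSpace Ω]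
    [TopologicalSpace Y] [MeasurableSpace Y] [BorelSpace Y] [HasOuterApproxClosed Y]
    [TopologicalSpace Z] [MeasurableSpace Z] [BorelSpace Z] [HasOuterApproxClosed Z]
    [HasOuterApproxClosed Ω] {T : Ω → Ω} (hT : Continuous T) {π : Ω → Y}
    (hπ : Continuous π) {Φ : Ω → Z} (hΦ : Continuous Φ) {κ : ℕ → Measure Ω}
    (hκ : ∀ K, κ K ∈ InvProb T) {ρ : ℕ → ProbabilityMeasure Y} {ρ' : ProbabilityMeasure Y}
    (hρ : Tendsto ρ atTop (𝓝 ρ')) (hκρ : ∀ K, (κ K).map π = ρ K) {μ : Measure Z}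
    (hκμ : ∀ K, (κ K).map Φ = μ) :
    ∃ κ' ∈ InvProb T, κ'.map π = ρ' ∧ κ'.map Φ = μ := by
  let κP : ℕ → ProbabilityMeasure Ω := fun K => ⟨κ K, (hκ K).1⟩
  let U : Ultrafilter ℕ := Ultrafilter.of atTop
  -- compactness of `ProbabilityMeasure Ω` provides a limit along an ultrafilter refining `atTop`
  let κ' := (U.map κP).lim
  have hlim : Tendsto κP U (𝓝 κ') := by
    rw [Tendsto, ← Ultrafilter.coe_map]
    exact Ultrafilter.le_nhds_lim _
  have hμ : IsProbabilityMeasure μ :=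
    hκμ 0 ▸ Measure.isProbabilityMeasure_map (μ := κP 0) hΦ.aemeasurable
  refine ⟨κ', ⟨inferInstance, ProbabilityMeasure.toMeasure_map_eq_of_tendsto hlim hT ?_⟩,
    ProbabilityMeasure.toMeasure_map_eq_of_tendsto hlim hπ ?_,
    ProbabilityMeasure.toMeasure_map_eq_of_tendsto hlim hΦ (ν := ⟨μ, hμ⟩) ?_⟩
  · convert hlim using 2 with K
    exact Subtype.ext (hκ K).2
  · convert hρ.mono_left (Ultrafilter.of_le atTop) using 2 with K
    exact Subtype.ext (hκρ K)
  · refine tendsto_const_nhds.congr fun K => ?_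
    exact Subtype.ext (hκμ K).symm

lemma continuous_shift : Continuous shift :=
  continuous_pi fun n => continuous_apply (n + 1)

lemma continuous_shift2 : Continuous shift2 :=
  continuous_shift.prodMap continuous_shift

lemma continuous_shift3 : Continuous shift3 :=
  continuous_shift2.prodMap continuous_shift

lemma continuous_Nmap : Continuous Nmap := by
  refine continuous_pi fun n => ?_
  have hcoord : Continuous fun t : (BinSeq × BinSeq) × BinSeq => (t.2 n, t.1.2 n, t.1.1 n) := by
    fun_prop
  exact (continuous_of_discreteTopology (f := fun b : Bool × Bool × Bool =>
    bif b.1 then b.2.1 else b.2.2)).comp hcoord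

lemma shift_iterate_apply (y : BinSeq) (k : ℕ) (m : ℤ) : shift^[k] y m = y (m + k) := by
  induction k generalizing y with
  | zero => simp
  | succ k ih => rw [Function.iterate_succ_apply, ih]; simp [shift, add_assoc]

lemma shift2_iterate (p : BinSeq × BinSeq) (k : ℕ) :
    shift2^[k] p = (shift^[k] p.1, shift^[k] p.2) := by
  rw [shift2, Prod.map_iterate]
  rfl

def window (M : ℕ) (p : BinSeq × BinSeq) : Finset.Icc (-(M : ℤ)) M → Bool × Bool :=
  fun j => (p.1 j, p.2 j)

lemma continuous_window (M : ℕ) : Continuous (window M) := by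
  unfold window; fun_prop

lemma window_eq_of_le {M M' : ℕ} (h : M ≤ M') {p q : BinSeq × BinSeq}
    (hpq : window M' p = window M' q) : window M p = window M q := by
  funext ⟨j, hj⟩
  have hj' : j ∈ Finset.Icc (-(M' : ℤ)) M' := by simp only [Finset.mem_Icc] at hj ⊢; omega
  exact congrFun hpq ⟨j, hj'⟩

lemma eq_of_forall_window_eq {p q : BinSeq × BinSeq} (h : ∀ M, window M p = window M q) :
    p = q := by
  have key : ∀ j : ℤ, (p.1 j, p.2 j) = (q.1 j, q.2 j) := fun j =>
    congrFun (h j.natAbs) ⟨j, by simp only [Finset.mem_Icc]; omega⟩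
  exact Prod.ext (funext fun j => congrArg Prod.fst (key j))
    (funext fun j => congrArg Prod.snd (key j))

lemma exists_window_abs_sub_lt (f : C(BinSeq × BinSeq, ℝ)) {ε : ℝ} (hε : 0 < ε) :
    ∃ M, ∀ p q, window M p = window M q → |f p - f q| < ε := by
  obtain ⟨M, hM⟩ := f.exists_abs_sub_lt_of_iInter_subset_diagonal
    (V := fun M => {pq | window M pq.1 = window M pq.2})
    (fun _ _ h _ hpq => window_eq_of_le h hpq)
    (fun M => isClosed_eq ((continuous_window M).comp continuous_fst)
      ((continuous_window M).comp continuous_snd))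
    (fun pq hpq => eq_of_forall_window_eq (Set.mem_iInter.1 hpq)) hε
  exact ⟨M, fun p q hpq => hM (p, q) hpq⟩

/-- Pairs `(w, x)` whose sandwich `[w, x]` leaves coordinate `j` free. -/
def freeSet (j : ℤ) : Set (BinSeq × BinSeq) := {p | p.1 j = false ∧ p.2 j = true}

lemma isClopen_freeSet (j : ℤ) : IsClopen (freeSet j) := by
  have : freeSet j = (fun p : BinSeq × BinSeq => (p.1 j, p.2 j)) ⁻¹' {(false, true)} := by
    ext p; simp [freeSet]
  rw [this]
  exact (isClopen_discrete _).preimage (by fun_prop)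

lemma measure_freeSet_eq {ρ : Measure (BinSeq × BinSeq)} (hρ : ρ.map shift2 = ρ) (j : ℤ) :
    ρ (freeSet j) = ρ (freeSet 0) := by
  have step : ∀ j, ρ (freeSet (j + 1)) = ρ (freeSet j) := fun j => by
    rw [show freeSet (j + 1) = shift2 ⁻¹' freeSet j from rfl, ← Measure.map_apply
      continuous_shift2.measurable (isClopen_freeSet j).isOpen.measurableSet, hρ]
  induction j using Int.induction_on with
  | zero => rfl
  | succ k ih => rw [step, ih]
  | pred k ih => rw [← ih, ← step, sub_add_cancel]

noncomputable def freeCount (M : ℕ) : C(BinSeq × BinSeq, ℝ) :=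
  ⟨fun p => ∑ j ∈ Finset.Icc (-(M : ℤ)) M, (freeSet j).indicator 1 p,
    continuous_finsetSum _ fun j _ => (isClopen_freeSet j).continuous_indicator continuous_const⟩

lemma integral_freeCount {ρ : Measure (BinSeq × BinSeq)} [IsFiniteMeasure ρ]
    (hρ : ρ.map shift2 = ρ) (M : ℕ) :
    ∫ p, freeCount M p ∂ρ = (2 * M + 1) * ρ.real (freeSet 0) := by
  simp only [freeCount, ContinuousMap.coe_mk]
  rw [integral_finsetSum _ fun j _ =>
    (integrable_const 1).indicator (isClopen_freeSet j).isOpen.measurableSet]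
  simp only [integral_indicator_one (isClopen_freeSet _).isOpen.measurableSet]
  simp only [Measure.real, measure_freeSet_eq hρ, Finset.sum_const, Int.card_Icc, nsmul_eq_mul]
  rw [show (M : ℤ) + 1 - -M = ((2 * M + 1 : ℕ) : ℤ) by push_cast; ring, Int.toNat_natCast]
  push_cast
  ring

def Nested (p q : BinSeq × BinSeq) : Prop :=
  ∀ n, p.1 n ≤ q.1 n ∧ q.1 n ≤ q.2 n ∧ q.2 n ≤ p.2 n

lemma Nested.iterate_shift2 {p q : BinSeq × BinSeq} (h : Nested p q) (k : ℕ) :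
    Nested (shift2^[k] p) (shift2^[k] q) := by
  intro n
  rw [shift2_iterate, shift2_iterate]
  simpa only [shift_iterate_apply] using h (n + k)

lemma Bool.outer_free_of_le_of_le_of_le {a b c d : Bool} (hab : a ≤ b) (hbc : b ≤ c)
    (hcd : c ≤ d) :
    ((b = false ∧ c = true) → (a = false ∧ d = true)) ∧
      ((a, d) ≠ (b, c) → (a = false ∧ d = true) ∧ ¬(b = false ∧ c = true)) := by
  revert a b c d; decide

lemma Nested.indicator_freeSet_le {p q : BinSeq × BinSeq} (h : Nested p q) (j : ℤ) :
    (freeSet j).indicator (1 : BinSeq × BinSeq → ℝ) q ≤ (freeSet j).indicator 1 p := by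
  have := (Bool.outer_free_of_le_of_le_of_le (h j).1 (h j).2.1 (h j).2.2).1
  simp only [Set.indicator_apply, freeSet, Set.mem_ofPred_eq, Pi.one_apply]
  split_ifs <;> simp_all

lemma Nested.indicator_freeSet_sub_eq_one {p q : BinSeq × BinSeq} (h : Nested p q) {j : ℤ}
    (hj : (p.1 j, p.2 j) ≠ (q.1 j, q.2 j)) :
    (freeSet j).indicator (1 : BinSeq × BinSeq → ℝ) p - (freeSet j).indicator 1 q = 1 := by
  have := (Bool.outer_free_of_le_of_le_of_le (h j).1 (h j).2.1 (h j).2.2).2 hj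
  simp only [Set.indicator_apply, freeSet, Set.mem_ofPred_eq, Pi.one_apply]
  split_ifs <;> simp_all

lemma Nested.abs_sub_le (f : C(BinSeq × BinSeq, ℝ)) {M : ℕ} {ε : ℝ}
    (hM : ∀ p q, window M p = window M q → |f p - f q| < ε) {p q : BinSeq × BinSeq}
    (h : Nested p q) : |f p - f q| ≤ ε + 2 * ‖f‖ * (freeCount M p - freeCount M q) := by
  have hε : 0 ≤ ε := (abs_nonneg _).trans (hM p p rfl).le
  have hle : ∀ j ∈ Finset.Icc (-(M : ℤ)) M,
      (freeSet j).indicator 1 q ≤ (freeSet j).indicator 1 p := fun j _ => h.indicator_freeSet_le j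
  -- a coordinate where the windows differ is free for `p` but not for `q`
  by_cases hw : window M p = window M q
  · refine (hM p q hw).le.trans (le_add_of_nonneg_right (mul_nonneg (by positivity) ?_))
    exact sub_nonneg.2 (Finset.sum_le_sum hle)
  obtain ⟨⟨j, hj⟩, hne⟩ := Function.ne_iff.1 hw
  have hone : 1 ≤ freeCount M p - freeCount M q := by
    simp only [freeCount, ContinuousMap.coe_mk, ← Finset.sum_sub_distrib]
    rw [← h.indicator_freeSet_sub_eq_one hne]
    exact Finset.single_le_sum (fun i hi => sub_nonneg.2 (hle i hi)) hj
  calc |f p - f q| ≤ ‖f‖ + ‖f‖ :=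
        (abs_sub _ _).trans (add_le_add (f.norm_coe_le_norm p) (f.norm_coe_le_norm q))
    _ = 2 * ‖f‖ * 1 := by ring
    _ ≤ 2 * ‖f‖ * (freeCount M p - freeCount M q) := by gcongr
    _ ≤ _ := le_add_of_nonneg_left hε

theorem tendsto_integral_of_nested {p : ℕ → BinSeq × BinSeq} {q : BinSeq × BinSeq}
    {N : ℕ → ℕ} {ρ : ℕ → Measure (BinSeq × BinSeq)} {ρ' : Measure (BinSeq × BinSeq)}
    (hnest : ∀ K, Nested (p K) q) (hρ : ∀ K, ρ K ∈ InvProb shift2) (hρ' : ρ' ∈ InvProb shift2)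
    (hp : ∀ K, QuasiGenericAlong shift2 (p K) N (ρ K)) (hq : QuasiGenericAlong shift2 q N ρ')
    (hdens : Tendsto (fun K => (ρ K).real (freeSet 0)) atTop (𝓝 (ρ'.real (freeSet 0))))
    (f : C(BinSeq × BinSeq, ℝ)) :
    Tendsto (fun K => ∫ z, f z ∂ρ K) atTop (𝓝 (∫ z, f z ∂ρ')) := by
  rw [Metric.tendsto_atTop]
  intro ε hε
  obtain ⟨M, hM⟩ := exists_window_abs_sub_lt f (half_pos hε)
  set C := 2 * ‖f‖ * (2 * M + 1)
  have hbound : ∀ K, |∫ z, f z ∂ρ K - ∫ z, f z ∂ρ'| ≤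
      ε / 2 + C * ((ρ K).real (freeSet 0) - ρ'.real (freeSet 0)) := fun K => by
    have := (hρ K).1
    have := hρ'.1
    have key := (hp K).abs_integral_sub_le hq (f := f) (g := (2 * ‖f‖) • freeCount M)
      (half_pos hε).le fun k => by
        simpa [mul_sub] using ((hnest K).iterate_shift2 k).abs_sub_le f hM
    simp only [ContinuousMap.coe_smul, Pi.smul_apply, smul_eq_mul, integral_const_mul,
      integral_freeCount (hρ K).2, integral_freeCount hρ'.2] at key
    linarith [show C * ((ρ K).real (freeSet 0) - ρ'.real (freeSet 0)) =
      2 * ‖f‖ * ((2 * M + 1) * (ρ K).real (freeSet 0)) -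
        2 * ‖f‖ * ((2 * M + 1) * ρ'.real (freeSet 0)) by ring]
  have hsmall : ∀ᶠ K in atTop, C * ((ρ K).real (freeSet 0) - ρ'.real (freeSet 0)) < ε / 2 := by
    have := (hdens.sub_const (ρ'.real (freeSet 0))).const_mul C
    rw [sub_self, mul_zero] at this
    exact this.eventually (gt_mem_nhds (half_pos hε))
  obtain ⟨K0, hK0⟩ := eventually_atTop.1 hsmall
  exact ⟨K0, fun K hK => by rw [Real.dist_eq]; linarith [hbound K, hK0 K hK]⟩

lemma measOn_mono {X Y : Set BinSeq} (h : X ⊆ Y) : MeasOn X ⊆ MeasOn Y := by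
  rintro μ ⟨hμ, hX⟩
  have := hμ.1
  exact ⟨hμ, le_antisymm prob_le_one (hX ▸ measure_mono h)⟩

lemma sandwichSet_mono {w x w' x' : BinSeq} (hw : ∀ n, w' n ≤ w n) (hx : ∀ n, x n ≤ x' n) :
    sandwichSet w x ⊆ sandwichSet w' x' := by
  rintro z ⟨k, y, h1, h2, rfl⟩
  exact ⟨k, y, fun n => (hw n).trans (h1 n), fun n => (h2 n).trans (hx n), rfl⟩

lemma Nmap_iterate_shift2_mem_sandwichSet {w x : BinSeq} (hwx : ∀ n, w n ≤ x n) (k : ℕ)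
    (y : BinSeq) : Nmap (shift2^[k] (w, x), y) ∈ sandwichSet w x := by
  refine ⟨k, Nmap ((w, x), fun m => y (m - k)), fun n => ?_, fun n => ?_, ?_⟩
  · simp only [Nmap]; cases y (n - k) <;> simp [hwx n]
  · simp only [Nmap]; cases y (n - k) <;> simp [hwx n]
  · funext m
    simp [Nmap, shift2_iterate, shift_iterate_apply]

def sandwichMeasures (ρ : Measure (BinSeq × BinSeq)) : Set (Measure BinSeq) :=
  {μ | ∃ κ ∈ InvProb shift3, Measure.map Prod.fst κ = ρ ∧ Measure.map Nmap κ = μ}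

lemma map_Nmap_mem_invProb {κ : Measure ((BinSeq × BinSeq) × BinSeq)}
    (hκ : κ ∈ InvProb shift3) : κ.map Nmap ∈ InvProb shift := by
  have := hκ.1
  refine ⟨Measure.isProbabilityMeasure_map continuous_Nmap.aemeasurable, ?_⟩
  rw [Measure.map_map continuous_shift.measurable continuous_Nmap.measurable]
  conv_rhs => rw [← hκ.2, Measure.map_map continuous_Nmap.measurable continuous_shift3.measurable]
  rfl

lemma sandwichMeasures_subset_measOn {w x : BinSeq} (hwx : ∀ n, w n ≤ x n) {N : ℕ → ℕ}
    {ρ : Measure (BinSeq × BinSeq)} [IsProbabilityMeasure ρ]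
    (hqg : QuasiGenericAlong shift2 (w, x) N ρ) :
    sandwichMeasures ρ ⊆ MeasOn (closure (sandwichSet w x)) := by
  rintro μ ⟨κ, hκ, hκρ, rfl⟩
  have := hκ.1
  set F := {p : BinSeq × BinSeq | ∀ y, Nmap (p, y) ∈ closure (sandwichSet w x)}
  have hF : IsClosed F := by
    simp only [F, Set.ofPred_forall]
    exact isClosed_iInter fun y =>
      isClosed_closure.preimage (continuous_Nmap.comp (Continuous.prodMk_left y))
  have hρF : ρ F = 1 := hqg.measure_eq_one hF fun k y =>
    subset_closure (Nmap_iterate_shift2_mem_sandwichSet hwx k y)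
  refine ⟨map_Nmap_mem_invProb hκ, le_antisymm prob_le_one ?_⟩
  rw [Measure.map_apply continuous_Nmap.measurable isClosed_closure.measurableSet, ← hρF, ← hκρ,
    Measure.map_apply measurable_fst hF.measurableSet]
  exact measure_mono fun t ht => ht t.2

lemma mem_sandwichMeasures_of_tendsto {ρ : ℕ → ProbabilityMeasure (BinSeq × BinSeq)}
    {ρ' : ProbabilityMeasure (BinSeq × BinSeq)} (hρ : Tendsto ρ atTop (𝓝 ρ'))
    {μ : Measure BinSeq} (hμ : ∀ K, μ ∈ sandwichMeasures (ρ K)) : μ ∈ sandwichMeasures ρ' := by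
  choose κ hκ hκρ hκμ using hμ
  exact exists_mem_invProb_map_eq_of_tendsto continuous_shift3 continuous_fst continuous_Nmap hκ
    hρ hκρ hκμ

theorem stmt12_general (w x : ℕ → BinSeq) (winf xinf : BinSeq) (N : ℕ → ℕ)
    (ρ : ℕ → Measure (BinSeq × BinSeq)) (ρinf : Measure (BinSeq × BinSeq))
    (hwx : ∀ K, leSeq (w K) (x K))
    (hwmono : ∀ n : ℤ, Monotone (fun K => w K n))
    (hxmono : ∀ n : ℤ, Antitone (fun K => x K n))
    (hwlim : ∀ n : ℤ, ∃ K0, ∀ K ≥ K0, w K n = winf n)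
    (hxlim : ∀ n : ℤ, ∃ K0, ∀ K ≥ K0, x K n = xinf n)
    (hP : ∀ K, ρ K ∈ InvProb shift2) (hPinf : ρinf ∈ InvProb shift2)
    (hqg : ∀ K, QuasiGenericAlong shift2 (w K, x K) N (ρ K))
    (hqginf : QuasiGenericAlong shift2 (winf, xinf) N ρinf)
    (hdens : Filter.Tendsto
      (fun K => ((ρ K) {p : BinSeq × BinSeq | p.1 0 = false ∧ p.2 0 = true}).toReal)
      Filter.atTop
      (nhds ((ρinf {p : BinSeq × BinSeq | p.1 0 = false ∧ p.2 0 = true}).toReal)))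
    (hsubK : ∀ K, SandwichSubord (closure (sandwichSet (w K) (x K))) (ρ K)) :
    SandwichSubord (⋂ K, closure (sandwichSet (w K) (x K))) ρinf ∧
    SandwichSubord (closure (sandwichSet winf xinf)) ρinf := by
  have hw K n : w K n ≤ winf n := (hwmono n).le_of_eventually_eq (hwlim n) K
  have hx K n : xinf n ≤ x K n := (hxmono n).ge_of_eventually_eq (hxlim n) K
  have hwxinf n : winf n ≤ xinf n := by
    obtain ⟨K1, h1⟩ := hwlim n
    obtain ⟨K2, h2⟩ := hxlim n
    simpa only [h1 _ (le_max_left K1 K2), h2 _ (le_max_right K1 K2)] using hwx (max K1 K2) n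
  have hρinf : IsProbabilityMeasure ρinf := hPinf.1
  let ρP : ℕ → ProbabilityMeasure (BinSeq × BinSeq) := fun K => ⟨ρ K, (hP K).1⟩
  let ρPinf : ProbabilityMeasure (BinSeq × BinSeq) := ⟨ρinf, hρinf⟩
  have hconv : Tendsto ρP atTop (𝓝 ρPinf) :=
    ProbabilityMeasure.tendsto_iff_forall_integral_tendsto.2 fun f =>
      tendsto_integral_of_nested (fun K n => ⟨hw K n, hwxinf n, hx K n⟩) hP hPinf hqg hqginf
        hdens f.toContinuousMap
  have h1 : MeasOn (closure (sandwichSet winf xinf)) ⊆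
      MeasOn (⋂ K, closure (sandwichSet (w K) (x K))) :=
    measOn_mono (Set.subset_iInter fun K => closure_mono (sandwichSet_mono (hw K) (hx K)))
  have h2 : MeasOn (⋂ K, closure (sandwichSet (w K) (x K))) ⊆ sandwichMeasures ρinf :=
    fun μ hμ => mem_sandwichMeasures_of_tendsto hconv fun K =>
      (hsubK K).subset (measOn_mono (Set.iInter_subset _ K) hμ)
  have h3 : sandwichMeasures ρinf ⊆ MeasOn (closure (sandwichSet winf xinf)) :=
    sandwichMeasures_subset_measOn hwxinf hqginf
  exact ⟨h2.antisymm (h3.trans h1), (h1.trans h2).antisymm h3⟩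

/-- Let `(w_K, x_K)` be a good sequence of pairs with limit `(w,x)`, and
suppose each `[w_K, x_K]‾` is a sandwich measure-theoretically subordinate subshift with base
measure `ρ_K`. Then both `⋂_K [w_K, x_K]‾` and `[w,x]‾` are sandwich measure-theoretically
subordinate subshifts with base measure `ρ = lim ρ_K`. -/
theorem stmt12 (w x : ℕ → BinSeq) (winf xinf : BinSeq) (N : ℕ → ℕ)
    (ρ : ℕ → Measure (BinSeq × BinSeq)) (ρinf : Measure (BinSeq × BinSeq))
    (hwx : ∀ K, leSeq (w K) (x K))
    (hwmono : ∀ n : ℤ, Monotone (fun K => w K n))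
    (hxmono : ∀ n : ℤ, Antitone (fun K => x K n))
    (hwlim : ∀ n : ℤ, ∃ K0, ∀ K ≥ K0, w K n = winf n)
    (hxlim : ∀ n : ℤ, ∃ K0, ∀ K ≥ K0, x K n = xinf n)
    (hN : StrictMono N)
    (hP : ∀ K, ρ K ∈ InvProb shift2) (hPinf : ρinf ∈ InvProb shift2)
    (hqg : ∀ K, QuasiGenericAlong shift2 (w K, x K) N (ρ K))
    (hqginf : QuasiGenericAlong shift2 (winf, xinf) N ρinf)
    (hdens : Filter.Tendsto
      (fun K => ((ρ K) {p : BinSeq × BinSeq | p.1 0 = false ∧ p.2 0 = true}).toReal)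
      Filter.atTop
      (nhds ((ρinf {p : BinSeq × BinSeq | p.1 0 = false ∧ p.2 0 = true}).toReal)))
    (hsubK : ∀ K, SandwichSubord (closure (sandwichSet (w K) (x K))) (ρ K))
    (hdiagK : ∀ K, AboveDiag (ρ K)) :
    SandwichSubord (⋂ K, closure (sandwichSet (w K) (x K))) ρinf ∧
    SandwichSubord (closure (sandwichSet winf xinf)) ρinf :=
  stmt12_general w x winf xinf N ρ ρinf hwx hwmono hxmono hwlim hxlim hP hPinf hqg hqginf hdens
    hsubK
end
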